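/- arXiv:2510.13069 — 5 statements merged into one kernel-verified Lean document; each statement's English description precedes it below -/
import Mathlib

section
/- The timed-Fréchet map preserves time and causality: if τ_∞ : [0,τ_max] × ℓ^∞ → ℝ is the projection to the first coordinate and the causal structure on the target is w ∈ J⁺(z) ⟺ τ_∞(w) − τ_∞(z) = d_{ℓ^∞}(w,z), then for any separable metric space X with Lipschitz-1 time function τ : X → [0,τ_max] whose causal relation is defined by τ(p)−τ(q)=d(p,q), the timed-Fréchet map κ_{τ,X} satisfies τ_∞(κ_{τ,X}(x)) = τ(x) and κ_{τ,X}(p) ∈ J⁺(κ_{τ,X}(q)) ⟺ p ∈ J⁺(q). -/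
/-- The timed-Fréchet map of a metric space `X` with time function `τ` and a
sequence of points `xs`: coordinate `0` is `τ x`, coordinate `n+1` is `dist (xs n) x`. -/
noncomputable def timedFrechet {X : Type*} [MetricSpace X] (τ : X → ℝ) (xs : ℕ → X)
    (x : X) : ℕ → ℝ
  | 0 => τ x
  | n + 1 => dist (xs n) x

lemma timedFrechet_sup_eq {X : Type*} [MetricSpace X]
    (xs : ℕ → X) (hdense : DenseRange xs)
    (τ : X → ℝ)
    (hτlip : ∀ x y : X, |τ x - τ y| ≤ dist x y) (p q : X) :
    (⨆ n : ℕ, |timedFrechet τ xs p n - timedFrechet τ xs q n|) = dist p q := by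
  have hb : ∀ n, |timedFrechet τ xs p n - timedFrechet τ xs q n| ≤ dist p q := by
    intro n
    cases n with
    | zero => exact hτlip p q
    | succ m =>
        simp only [timedFrechet]
        rw [dist_comm (xs m) p, dist_comm (xs m) q]
        exact abs_dist_sub_le p q (xs m)
  refine le_antisymm (ciSup_le hb) ?_
  have hbdd : BddAbove (Set.range fun n => |timedFrechet τ xs p n - timedFrechet τ xs q n|) :=
    ⟨dist p q, by rintro _ ⟨n, rfl⟩; exact hb n⟩
  refine le_of_forall_pos_le_add fun ε hε => ?_
  obtain ⟨n, hx⟩ := Metric.denseRange_iff.mp hdense p (ε/2) (by linarith)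
  have h1 : dist p q - ε ≤ |timedFrechet τ xs p (n+1) - timedFrechet τ xs q (n+1)| := by
    simp only [timedFrechet]
    have h3 : dist (xs n) p ≤ ε/2 := by rw [dist_comm]; linarith
    have h2 : dist (xs n) q ≥ dist p q - ε/2 := by
      have := dist_triangle p (xs n) q
      linarith
    have := le_abs_self (dist (xs n) p - dist (xs n) q)
    have := neg_abs_le (dist (xs n) p - dist (xs n) q)
    have hd : dist (xs n) p ≥ 0 := dist_nonneg
    linarith
  have := le_ciSup hbdd (n+1)
  linarith

/-- The timed-Fréchet map preserves time and causality: its 0th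
coordinate is `τ(x)` (time preserving, where `τ_∞` is projection to the first
coordinate), and with the causal structure on the target given by
`w ∈ J⁺(z) ⟺ τ_∞(w) − τ_∞(z) = d_{ℓ^∞}(w,z)` (sup distance) and the causal
structure on `X` given by `p ∈ J⁺(q) ⟺ τ(p) − τ(q) = d(p,q)`, we have
`κ_{τ,X}(p) ∈ J⁺(κ_{τ,X}(q)) ⟺ p ∈ J⁺(q)`. -/
theorem timedFrechet_time_and_causality_preserving {X : Type*} [MetricSpace X]
    (xs : ℕ → X) (hdense : DenseRange xs)
    (τ : X → ℝ) (τmax : ℝ) (hτrange : ∀ x, τ x ∈ Set.Icc 0 τmax)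
    (hτlip : ∀ x y : X, |τ x - τ y| ≤ dist x y) :
    (∀ x : X, timedFrechet τ xs x 0 = τ x) ∧
    (∀ p q : X,
      (timedFrechet τ xs p 0 - timedFrechet τ xs q 0 =
        ⨆ n : ℕ, |timedFrechet τ xs p n - timedFrechet τ xs q n|) ↔
      (τ p - τ q = dist p q)) := by
  refine ⟨fun x => rfl, fun p q => ?_⟩
  rw [timedFrechet_sup_eq xs hdense τ hτlip p q]
  exact Iff.rfl
end

section
/- Let (X_j, d_j) for j ∈ ℕ be metric spaces and I_i^j : A_i → X_j maps from finite sets A_i such that I_i^j(A_i) is an ε_i-net of X_j for all j. Suppose b ∈ A_k and the distances d^j(a,b) := d_j(I^j(a), I^j(b)) converge as j → ∞ for all a, b ∈ A = ⊔A_i. Then for each i there exists a ∈ A_i with lim_{j→∞} d^j(a,b) ≤ ε_i. Consequently, the equivalence classes {[a] : a ∈ A_i} form an ε_i-net of the limit quotient space X_∞, and the completion of X_∞ is compact. -/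
open Filter

/-- Let `(X j, d j)` be metric spaces and `I i j : A i → X j` maps from
finite index sets whose images are `(1/2)^i`-nets of `X j` for all `j`. Suppose the
distances `d j (a,b) := dist (I a.1 j a.2) (I b.1 j b.2)` converge as `j → ∞` for all
`a, b ∈ A = ⊔ A i`, to `dinf`. Then for each `i` and each `b` there exists `a ∈ A i`
with `dinf ⟨i,a⟩ b ≤ (1/2)^i`. Consequently, the classes `[a]`, `a ∈ A i`, form a
`(1/2)^i`-net of the limit quotient space `X_∞` (realized as any metric space `Y` with
a dense map `q` inducing `dinf`), which is thus totally bounded, and the completion of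
`X_∞` is compact. -/
theorem limit_space_totally_bounded_completion_compact
    (X : ℕ → Type*) [∀ j, MetricSpace (X j)]
    (A : ℕ → Type*) [∀ i, Finite (A i)]
    (I : ∀ (i : ℕ) (j : ℕ), A i → X j)
    (hnet : ∀ (i j : ℕ) (x : X j), ∃ a : A i, dist x (I i j a) ≤ (1/2 : ℝ) ^ i)
    (dinf : (Σ i, A i) → (Σ i, A i) → ℝ)
    (hlim : ∀ a b : Σ i, A i,
      Tendsto (fun j => dist (I a.1 j a.2) (I b.1 j b.2)) atTop (nhds (dinf a b))) :
    (∀ (i : ℕ) (b : Σ k, A k), ∃ a : A i, dinf ⟨i, a⟩ b ≤ (1/2 : ℝ) ^ i) ∧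
    (∀ (Y : Type*) [MetricSpace Y] (q : (Σ i, A i) → Y), DenseRange q →
      (∀ a b, dist (q a) (q b) = dinf a b) →
      TotallyBounded (Set.univ : Set Y) ∧
        CompactSpace (UniformSpace.Completion Y)) := by
  have key : ∀ (i : ℕ) (b : Σ k, A k), ∃ a : A i, dinf ⟨i, a⟩ b ≤ (1/2 : ℝ) ^ i := by
    intro i b
    by_contra h
    push_neg at h
    -- for each a, eventually dist > (1/2)^i
    have hev : ∀ᶠ j in atTop, ∀ a : A i,
        (1/2 : ℝ) ^ i < dist (I i j a) (I b.1 j b.2) := by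
      rw [eventually_all]
      intro a
      exact (hlim ⟨i, a⟩ b).eventually (eventually_gt_nhds (h a))
    obtain ⟨j, hj⟩ := hev.exists
    obtain ⟨a, ha⟩ := hnet i j (I b.1 j b.2)
    rw [dist_comm] at ha
    exact absurd ha (not_le.mpr (hj a))
  refine ⟨key, fun Y _ q hq hd => ?_⟩
  have htb : TotallyBounded (Set.univ : Set Y) := by
    rw [Metric.totallyBounded_iff]
    intro ε hε
    obtain ⟨i, hi⟩ := exists_pow_lt_of_lt_one (half_pos hε) (by norm_num : (1/2 : ℝ) < 1)
    refine ⟨Set.range (fun a : A i => q ⟨i, a⟩), (Set.finite_range _), ?_⟩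
    intro y _
    -- density: find b with dist y (q b) < ε/2 - (1/2)^i... simpler: < ε - (1/2)^i
    have hpos : 0 < ε - (1/2 : ℝ) ^ i := by
      have : (1/2 : ℝ) ^ i < ε := hi.trans (by linarith)
      linarith
    obtain ⟨b, hb⟩ := Metric.denseRange_iff.mp hq y _ hpos
    obtain ⟨a, ha⟩ := key i b
    refine Set.mem_iUnion₂.mpr ⟨q ⟨i, a⟩, ⟨a, rfl⟩, ?_⟩
    rw [Metric.mem_ball]
    calc dist y (q ⟨i, a⟩) ≤ dist y (q b) + dist (q b) (q ⟨i, a⟩) := dist_triangle _ _ _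
      _ < (ε - (1/2 : ℝ) ^ i) + (1/2 : ℝ) ^ i := by
          have : dist (q b) (q ⟨i, a⟩) ≤ (1/2 : ℝ) ^ i := by
            rw [dist_comm, hd]; exact ha
          linarith
      _ = ε := by ring
  refine ⟨htb, ?_⟩
  rw [← isCompact_univ_iff]
  rw [isCompact_iff_totallyBounded_isComplete]
  constructor
  · have hdense : Dense (Set.range ((↑) : Y → UniformSpace.Completion Y)) :=
      UniformSpace.Completion.denseRange_coe
    have : Set.range ((↑) : Y → UniformSpace.Completion Y) =
        ((↑) : Y → UniformSpace.Completion Y) '' Set.univ := (Set.image_univ).symm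
    have htb2 : TotallyBounded (Set.range ((↑) : Y → UniformSpace.Completion Y)) := by
      rw [this]
      exact htb.image (UniformSpace.Completion.uniformContinuous_coe Y)
    have := htb2.closure
    rwa [hdense.closure_eq] at this
  · exact completeSpace_iff_isComplete_univ.mp inferInstance
end

section
/- (Timed Gromov Compactness) If (X_j, d_j, τ_j) is a sequence of compact timed metric spaces with diam(X_j) ≤ D, uniformly totally bounded (for every R ∈ (0,D] there is N(R) such that each X_j is covered by N(R) balls of radius R), and τ_j : X_j → [0, τ_max] Lipschitz-1, then a subsequence converges in the intrinsic timed Hausdorff sense to a compact timed metric space (X̄_∞, d_∞, τ_∞): there exist distance and time preserving timed-Fréchet maps φ_j : X_j → [0,τ_max] × Z ⊂ ℓ^∞ with Z compact, such that d_H(φ_j(X_j), φ_∞(X̄_∞)) → 0. -/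
/-!
Enumerate `1/(n+1)`-nets of all the `X j`, of sizes independent of `j`, by one index set `ℕ`.
Along a subsequence all distances between net points and all their times converge; the limit
distances form a pseudometric on `ℕ` whose completion is the limit space, compact because the
nets pass to the limit. At level `n` the net of `X (g n)` and the limit net with the same indices
then match up to `O(1/n)`. The limit's Fréchet map uses the fixed sequence `p ↦ i p.unpair.1`,
which lists every limit net point infinitely often, while for `X (g n)` we choose a dense sequence
whose `p`-th term lies near the net point matched with `i p.unpair.1`. Along this correspondence
the two Fréchet maps are `O(1/n)`-close, which gives the Hausdorff convergence.
-/

open Filter Metric Set Topology ENNReal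

universe u

noncomputable section

namespace TimedGromov

theorem lipschitzWith_one_iff_abs_sub_le {α : Type*} [PseudoMetricSpace α] {f : α → ℝ} :
    LipschitzWith 1 f ↔ ∀ x y, |f x - f y| ≤ dist x y := by
  simp [lipschitzWith_iff_dist_le_mul, Real.dist_eq]

section Frechet

variable {X Y : Type*} [MetricSpace X] [MetricSpace Y]

def timedFrechetCoords (τ : X → ℝ) (s : ℕ → X) (x : X) : ℕ → ℝ
  | 0 => τ x
  | n + 1 => dist (s n) x

theorem memℓp_timedFrechetCoords [CompactSpace X] {τ : X → ℝ} (hτ : Continuous τ) (s : ℕ → X)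
    (x : X) : Memℓp (timedFrechetCoords τ s x) ∞ := by
  obtain ⟨C, hC⟩ := isCompact_univ.exists_bound_of_continuousOn hτ.continuousOn
  refine memℓp_infty ⟨max C (diam (univ : Set X)), ?_⟩
  rintro _ ⟨n, rfl⟩
  cases n with
  | zero => exact (hC x trivial).trans (le_max_left _ _)
  | succ n =>
    change |dist (s n) x| ≤ _
    rw [abs_of_nonneg dist_nonneg]
    exact (dist_le_diam_of_mem isCompact_univ.isBounded trivial trivial).trans (le_max_right _ _)

def timedFrechetMap [CompactSpace X] {τ : X → ℝ} (hτ : Continuous τ) (s : ℕ → X) (x : X) :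
    lp (fun _ : ℕ => ℝ) ∞ :=
  ⟨timedFrechetCoords τ s x, memℓp_timedFrechetCoords hτ s x⟩

theorem abs_apply_sub_apply_le_dist {ι : Type*} (f g : lp (fun _ : ι => ℝ) ∞) (i : ι) :
    |f i - g i| ≤ dist f g := by
  simpa [dist_eq_norm] using lp.norm_apply_le_norm ENNReal.top_ne_zero (f - g) i

variable [CompactSpace X] [CompactSpace Y] {τ : X → ℝ} {σ : Y → ℝ}

theorem dist_timedFrechetMap_le (hτ : Continuous τ) (hσ : Continuous σ) (s : ℕ → X)
    (s' : ℕ → Y) {x : X} {y : Y} {C : ℝ} (htime : |τ x - σ y| ≤ C)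
    (hdist : ∀ n, |dist (s n) x - dist (s' n) y| ≤ C) :
    dist (timedFrechetMap hτ s x) (timedFrechetMap hσ s' y) ≤ C := by
  rw [dist_eq_norm]
  refine lp.norm_le_of_forall_le ((abs_nonneg _).trans htime) fun n => ?_
  cases n with
  | zero => exact htime
  | succ n => exact hdist n

theorem isometry_timedFrechetMap (hτ : LipschitzWith 1 τ) {s : ℕ → X} (hs : DenseRange s) :
    Isometry (timedFrechetMap hτ.continuous s) := by
  refine Isometry.of_dist_eq fun x y => le_antisymm ?_ ?_
  · refine dist_timedFrechetMap_le _ _ _ _ (lipschitzWith_one_iff_abs_sub_le.1 hτ x y) fun n => ?_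
    simpa [dist_comm] using abs_dist_sub_le x y (s n)
  · refine le_of_forall_pos_le_add fun ε hε => ?_
    obtain ⟨n, hn⟩ := denseRange_iff.1 hs x (ε / 2) (half_pos hε)
    have hcoord : |dist (s n) x - dist (s n) y| ≤ _ :=
      abs_apply_sub_apply_le_dist (timedFrechetMap hτ.continuous s x)
        (timedFrechetMap hτ.continuous s y) (n + 1)
    linarith [dist_triangle x (s n) y, dist_comm x (s n), neg_abs_le (dist (s n) x - dist (s n) y)]

theorem hausdorffDist_range_timedFrechetMap_le (hτ : Continuous τ) (hσ : Continuous σ)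
    {s : ℕ → X} {s' : ℕ → Y} {R : X → Y → Prop} {ε : ℝ} (hε : 0 ≤ ε)
    (hRX : ∀ x, ∃ y, R x y) (hRY : ∀ y, ∃ x, R x y)
    (htime : ∀ x y, R x y → |τ x - σ y| ≤ ε)
    (hdist : ∀ x y x' y', R x y → R x' y' → |dist x x' - dist y y'| ≤ ε)
    (hs : ∀ n, R (s n) (s' n)) :
    hausdorffDist (range (timedFrechetMap hτ s)) (range (timedFrechetMap hσ s')) ≤ ε := by
  have hR : ∀ x y, R x y → dist (timedFrechetMap hτ s x) (timedFrechetMap hσ s' y) ≤ ε :=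
    fun x y h => dist_timedFrechetMap_le hτ hσ s s' (htime x y h)
      fun n => hdist _ _ _ _ (hs n) h
  refine hausdorffDist_le_of_mem_dist hε ?_ ?_
  · rintro _ ⟨x, rfl⟩
    obtain ⟨y, hy⟩ := hRX x
    exact ⟨_, mem_range_self y, hR x y hy⟩
  · rintro _ ⟨y, rfl⟩
    obtain ⟨x, hx⟩ := hRY y
    exact ⟨_, mem_range_self x, (dist_comm _ _).trans_le (hR x y hx)⟩

end Frechet

theorem exists_denseRange_mem_of_iUnion_eq_univ {X : Type*} [TopologicalSpace X]
    [SecondCountableTopology X] {F : ℕ → Set X} (hne : ∀ n, (F n).Nonempty)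
    (hcov : ⋃ n, F n = univ) : ∃ s : ℕ → X, DenseRange s ∧ ∀ p, s p ∈ F p.unpair.1 := by
  have hseq : ∀ n, ∃ u : ℕ → F n, DenseRange u := fun n =>
    have := (hne n).to_subtype
    TopologicalSpace.exists_dense_seq _
  choose u hu using hseq
  refine ⟨fun p => u p.unpair.1 p.unpair.2, ?_, fun p => (u _ _).2⟩
  refine dense_iff_closure_eq.2 (eq_univ_of_univ_subset (hcov ▸ iUnion_subset fun n => ?_))
  refine (Subtype.dense_iff.1 (hu n)).trans (closure_mono ?_)
  rintro _ ⟨_, ⟨m, rfl⟩, rfl⟩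
  exact ⟨Nat.pair n m, by dsimp only; rw [Nat.unpair_pair]⟩

section MatchedNets

variable {X Y ι : Type*} [MetricSpace X] [MetricSpace Y]

structure MatchedNets (τ : X → ℝ) (σ : Y → ℝ) (t : ι → X) (i : ι → Y) (J : Finset ι) (ε : ℝ) :
    Prop where
  cover_left : ∀ x, ∃ a ∈ J, dist x (t a) ≤ ε
  cover_right : ∀ y, ∃ a ∈ J, dist y (i a) ≤ ε
  abs_dist_sub_le : ∀ a ∈ J, ∀ b ∈ J, |dist (t a) (t b) - dist (i a) (i b)| ≤ ε
  abs_time_sub_le : ∀ a ∈ J, |τ (t a) - σ (i a)| ≤ ε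

theorem MatchedNets.exists_denseRange_hausdorffDist_le [CompactSpace X] [CompactSpace Y]
    {τ : X → ℝ} {σ : Y → ℝ} (hτ : LipschitzWith 1 τ) (hσ : LipschitzWith 1 σ) {t : ℕ → X}
    {i : ℕ → Y} {J : Finset ℕ} {ε : ℝ} (hε : 0 ≤ ε) (h : MatchedNets τ σ t i J ε) :
    ∃ s : ℕ → X, DenseRange s ∧
      hausdorffDist (range (timedFrechetMap hτ.continuous s))
        (range (timedFrechetMap hσ.continuous fun p => i p.unpair.1)) ≤ 5 * ε := by
  set R : X → Y → Prop := fun x y => ∃ a ∈ J, dist x (t a) ≤ ε ∧ dist y (i a) ≤ ε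
  have hRY : ∀ y, ∃ x, R x y := fun y =>
    let ⟨a, ha, hy⟩ := h.cover_right y
    ⟨t a, a, ha, by simpa using hε, hy⟩
  have hRX : ∀ x, ∃ a, R x (i a) := fun x =>
    let ⟨a, ha, hx⟩ := h.cover_left x
    ⟨a, a, ha, hx, by simpa using hε⟩
  obtain ⟨s, hs, hsR⟩ := exists_denseRange_mem_of_iUnion_eq_univ (F := fun n => {x | R x (i n)})
    (fun n => hRY (i n)) (eq_univ_of_forall fun x => mem_iUnion.2 (hRX x))
  refine ⟨s, hs, hausdorffDist_range_timedFrechetMap_le _ _ (by positivity)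
    (fun x => let ⟨a, h⟩ := hRX x; ⟨i a, h⟩) hRY ?_ ?_ hsR⟩
  · rintro x y ⟨a, ha, hx, hy⟩
    have h₁ := lipschitzWith_one_iff_abs_sub_le.1 hτ x (t a)
    have h₂ := h.abs_time_sub_le a ha
    have h₃ := lipschitzWith_one_iff_abs_sub_le.1 hσ y (i a)
    have := abs_sub_le (τ x) (τ (t a)) (σ y)
    have := abs_sub_le (τ (t a)) (σ (i a)) (σ y)
    rw [abs_sub_comm (σ (i a))] at this
    linarith
  · rintro x y x' y' ⟨a, ha, hx, hy⟩ ⟨b, hb, hx', hy'⟩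
    have h₁ := dist_dist_dist_le x x' (t a) (t b)
    have h₂ := h.abs_dist_sub_le a ha b hb
    have h₃ := dist_dist_dist_le y y' (i a) (i b)
    rw [Real.dist_eq] at h₁ h₃
    have := abs_sub_le (dist x x') (dist (t a) (t b)) (dist y y')
    have := abs_sub_le (dist (t a) (t b)) (dist (i a) (i b)) (dist y y')
    rw [abs_sub_comm (dist (i a) (i b))] at this
    linarith

end MatchedNets

section Limit

variable {X : ℕ → Type*} [∀ j, MetricSpace (X j)]

theorem exists_uniform_net_of_dist_le [∀ j, Nonempty (X j)] {D : ℝ}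
    (hD : ∀ j (x y : X j), dist x y ≤ D) {N : ℝ → ℕ}
    (hN : ∀ R ∈ Ioc (0 : ℝ) D, ∀ j, ∃ c : Fin (N R) → X j, ∀ x, ∃ m, dist x (c m) < R) :
    ∀ R > 0, ∃ M : ℕ, ∀ j, ∃ c : Fin M → X j, ∀ x, ∃ m, dist x (c m) < R := by
  intro R hR
  by_cases hRD : R ≤ D
  · exact ⟨N R, hN R ⟨hR, hRD⟩⟩
  · refine ⟨1, fun j => ⟨fun _ => Classical.arbitrary _, fun x => ⟨0, ?_⟩⟩⟩
    exact (hD j _ _).trans_lt (not_le.1 hRD)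

theorem exists_seq_uniform_nets [∀ j, Nonempty (X j)]
    (h : ∀ R > 0, ∃ M : ℕ, ∀ j, ∃ c : Fin M → X j, ∀ x, ∃ m, dist x (c m) < R)
    {ε : ℕ → ℝ} (hε : ∀ n, 0 < ε n) :
    ∃ (t : ∀ j, ℕ → X j) (J : ℕ → Finset ℕ), ∀ n j x, ∃ a ∈ J n, dist x (t j a) < ε n := by
  choose M c hc using fun n => h (ε n) (hε n)
  refine ⟨fun j p => if hp : p.unpair.2 < M p.unpair.1 then c _ j ⟨_, hp⟩
    else Classical.arbitrary _, fun n => (Finset.range (M n)).image (Nat.pair n), fun n j x => ?_⟩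
  obtain ⟨m, hm⟩ := hc n j x
  refine ⟨Nat.pair n m, Finset.mem_image_of_mem _ (Finset.mem_range.2 m.2), ?_⟩
  dsimp only
  rw [Nat.unpair_pair]
  simpa [m.2] using hm

theorem exists_subseq_forall_tendsto {ι : Type*} [Countable ι] {K : Set ℝ} (hK : IsCompact K)
    {f : ℕ → ι → ℝ} (hf : ∀ k i, f k i ∈ K) :
    ∃ g : ℕ → ℕ, StrictMono g ∧
      ∃ L : ι → ℝ, ∀ i, Tendsto (fun k => f (g k) i) atTop (𝓝 (L i)) := by
  obtain ⟨L, -, g, hg, hL⟩ :=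
    (isCompact_univ_pi fun _ : ι => hK).tendsto_subseq fun k => mem_univ_pi.2 (hf k)
  exact ⟨g, hg, L, fun i => tendsto_pi_nhds.1 hL i⟩

theorem exists_limit_of_tendsto_dist {ι : Type u} {t : ∀ k, ι → X k} {τ : ∀ k, X k → ℝ}
    (hτ : ∀ k, LipschitzWith 1 (τ k)) {ℓ : ι → ι → ℝ} {T : ι → ℝ}
    (hℓ : ∀ a b, Tendsto (fun k => dist (t k a) (t k b)) atTop (𝓝 (ℓ a b)))
    (hT : ∀ a, Tendsto (fun k => τ k (t k a)) atTop (𝓝 (T a))) :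
    ∃ (Y : Type u) (_ : MetricSpace Y) (i : ι → Y) (σ : Y → ℝ), CompleteSpace Y ∧
      DenseRange i ∧ LipschitzWith 1 σ ∧ (∀ a b, dist (i a) (i b) = ℓ a b) ∧
        ∀ a, σ (i a) = T a := by
  let _ : PseudoMetricSpace ι :=
    { dist := ℓ
      dist_self := fun a => tendsto_nhds_unique (hℓ a a) (by simp)
      dist_comm := fun a b =>
        tendsto_nhds_unique (hℓ a b) ((hℓ b a).congr fun _ => dist_comm _ _)
      dist_triangle := fun a b c => le_of_tendsto_of_tendsto' (hℓ a c) ((hℓ a b).add (hℓ b c))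
        fun _ => dist_triangle _ _ _ }
  have hTlip : LipschitzWith 1 T := lipschitzWith_one_iff_abs_sub_le.2 fun a b =>
    le_of_tendsto_of_tendsto' ((hT a).sub (hT b)).abs (hℓ a b)
      fun k => lipschitzWith_one_iff_abs_sub_le.1 (hτ k) _ _
  exact ⟨UniformSpace.Completion ι, inferInstance, (↑), UniformSpace.Completion.extension T,
    inferInstance, UniformSpace.Completion.denseRange_coe, hTlip.completion_extension,
    UniformSpace.Completion.dist_eq, UniformSpace.Completion.extension_coe hTlip.uniformContinuous⟩

theorem exists_mem_dist_lt_two_mul_of_tendsto {ι Y : Type*} [MetricSpace Y] {t : ∀ k, ι → X k}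
    {i : ι → Y} (hi : DenseRange i)
    (hdist : ∀ a b, Tendsto (fun k => dist (t k a) (t k b)) atTop (𝓝 (dist (i a) (i b))))
    {J : Finset ι} {ε : ℝ} (hε : 0 < ε) (hJ : ∀ k x, ∃ a ∈ J, dist x (t k a) < ε) (y : Y) :
    ∃ a ∈ J, dist y (i a) < 2 * ε := by
  obtain ⟨v, hv⟩ := denseRange_iff.1 hi y ε hε
  suffices ∃ a ∈ J, dist (i v) (i a) ≤ ε by
    obtain ⟨a, ha, hva⟩ := this
    exact ⟨a, ha, by linarith [dist_triangle y (i v) (i a)]⟩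
  by_contra! hfar
  have hev : ∀ᶠ k in atTop, ∀ a ∈ J, ε < dist (t k v) (t k a) :=
    J.eventually_all.2 fun a ha => (hdist v a).eventually (lt_mem_nhds (hfar a ha))
  obtain ⟨k, hk⟩ := hev.exists
  obtain ⟨a, ha, hlt⟩ := hJ k (t k v)
  exact (hk a ha).not_gt hlt

theorem eventually_matchedNets {ι Y : Type*} [MetricSpace Y] {τ : ∀ k, X k → ℝ} {σ : Y → ℝ}
    {t : ∀ k, ι → X k} {i : ι → Y} {J : Finset ι} {ε : ℝ} (hε : 0 < ε)
    (hX : ∀ k x, ∃ a ∈ J, dist x (t k a) ≤ ε) (hY : ∀ y, ∃ a ∈ J, dist y (i a) ≤ ε)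
    (hdist : ∀ a b, Tendsto (fun k => dist (t k a) (t k b)) atTop (𝓝 (dist (i a) (i b))))
    (htime : ∀ a, Tendsto (fun k => τ k (t k a)) atTop (𝓝 (σ (i a)))) :
    ∀ᶠ k in atTop, MatchedNets (τ k) σ (t k) i J ε := by
  have hdist' : ∀ a b, ∀ᶠ k in atTop, |dist (t k a) (t k b) - dist (i a) (i b)| ≤ ε :=
    fun a b => (hdist a b).eventually (closedBall_mem_nhds _ hε)
  have htime' : ∀ a, ∀ᶠ k in atTop, |τ k (t k a) - σ (i a)| ≤ ε :=
    fun a => (htime a).eventually (closedBall_mem_nhds _ hε)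
  filter_upwards [J.eventually_all.2 fun a _ => J.eventually_all.2 fun b _ => hdist' a b,
    J.eventually_all.2 fun a _ => htime' a] with k hd ht
  exact ⟨hX k, hY, hd, ht⟩

theorem exists_subseq_matchedNets {τ : ∀ j, X j → ℝ} (hτ : ∀ j, LipschitzWith 1 (τ j)) {T D : ℝ}
    (hτT : ∀ j x, τ j x ∈ Icc 0 T) (hD : ∀ j (x y : X j), dist x y ≤ D) {t : ∀ j, ℕ → X j}
    {J : ℕ → Finset ℕ} {ε : ℕ → ℝ} (hε : ∀ n, 0 < ε n) (hε₀ : Tendsto ε atTop (𝓝 0))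
    (hJ : ∀ n j x, ∃ a ∈ J n, dist x (t j a) < ε n) :
    ∃ g : ℕ → ℕ, StrictMono g ∧ ∃ (Y : Type) (_ : MetricSpace Y) (σ : Y → ℝ) (i : ℕ → Y),
      CompactSpace Y ∧ DenseRange i ∧ LipschitzWith 1 σ ∧ (∀ y, σ y ∈ Icc 0 T) ∧
      ∀ n, MatchedNets (τ (g n)) σ (t (g n)) i (J n) (2 * ε n) := by
  obtain ⟨g, hg, L, hL⟩ := exists_subseq_forall_tendsto (ι := ℕ ⊕ ℕ × ℕ)
    (isCompact_Icc (a := 0) (b := max T D))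
    (f := fun k => Sum.elim (fun a => τ k (t k a)) fun ab => dist (t k ab.1) (t k ab.2))
    fun k => Sum.rec (fun a => ⟨(hτT k _).1, (hτT k _).2.trans (le_max_left _ _)⟩)
      fun ab => ⟨dist_nonneg, (hD k _ _).trans (le_max_right _ _)⟩
  obtain ⟨Y, _, i, σ, _, hi, hσ, hdist, hσi⟩ := exists_limit_of_tendsto_dist
    (t := fun k => t (g k)) (fun k => hτ (g k)) (fun a b => hL (.inr (a, b))) fun a => hL (.inl a)
  have hdist' (a b : ℕ) :
      Tendsto (fun k => dist (t (g k) a) (t (g k) b)) atTop (𝓝 (dist (i a) (i b))) :=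
    hdist a b ▸ hL (.inr (a, b))
  have htime (a : ℕ) : Tendsto (fun k => τ (g k) (t (g k) a)) atTop (𝓝 (σ (i a))) :=
    hσi a ▸ hL (.inl a)
  have hcover : ∀ n y, ∃ a ∈ J n, dist y (i a) < 2 * ε n := fun n =>
    exists_mem_dist_lt_two_mul_of_tendsto hi hdist' (hε n) fun k => hJ n (g k)
  have hY : CompactSpace Y := by
    refine ⟨(totallyBounded_iff.2 fun δ hδ => ?_).isCompact_of_isClosed isClosed_univ⟩
    obtain ⟨n, hn⟩ := (hε₀.eventually (gt_mem_nhds (half_pos hδ))).exists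
    refine ⟨i '' J n, (J n).finite_toSet.image _, fun y _ => ?_⟩
    obtain ⟨a, ha, hya⟩ := hcover n y
    exact mem_biUnion (mem_image_of_mem _ ha) (mem_ball.2 (by linarith))
  have hσT : ∀ y, σ y ∈ Icc 0 T := fun y => hi.induction_on y
    (isClosed_Icc.preimage hσ.continuous) fun a =>
      isClosed_Icc.mem_of_tendsto (htime a) (Eventually.of_forall fun k => hτT _ _)
  obtain ⟨φ, hφ, hmatch⟩ := extraction_forall_of_eventually fun n =>
    eventually_matchedNets (τ := fun k => τ (g k)) (by linarith [hε n])
    (fun k x => (hJ n (g k) x).imp fun a ⟨ha, hx⟩ => ⟨ha, by linarith [hε n]⟩)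
    (fun y => (hcover n y).imp fun a ⟨ha, hy⟩ => ⟨ha, hy.le⟩) hdist' htime
  exact ⟨g ∘ φ, hg.comp hφ, Y, _, σ, i, hY, hi, hσ, hσT, hmatch⟩

end Limit

theorem exists_isCompact_superset_of_tendsto_hausdorffDist {α : Type*} [MetricSpace α]
    [CompleteSpace α] {K : ℕ → Set α} {L : Set α} (hK : ∀ n, IsCompact (K n)) (hL : IsCompact L)
    (hL' : L.Nonempty) (h : Tendsto (fun n => hausdorffDist (K n) L) atTop (𝓝 0)) :
    ∃ Z, IsCompact Z ∧ (∀ n, K n ⊆ Z) ∧ L ⊆ Z := by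
  refine ⟨closure (L ∪ ⋃ n, K n), ?_, fun n => (subset_iUnion K n).trans
    (subset_union_right.trans subset_closure), subset_union_left.trans subset_closure⟩
  refine (TotallyBounded.closure ?_).isCompact_of_isClosed isClosed_closure
  refine totallyBounded_iff.2 fun δ hδ => ?_
  obtain ⟨N, hN⟩ := eventually_atTop.1 (h.eventually (gt_mem_nhds (half_pos hδ)))
  set F := L ∪ ⋃ n ∈ Finset.range N, K n
  have hnear : ∀ p ∈ L ∪ ⋃ n, K n, ∃ q ∈ F, dist p q < δ / 2 := by
    rintro p (hp | hp)
    · exact ⟨p, subset_union_left hp, by simpa using half_pos hδ⟩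
    obtain ⟨n, hp⟩ := mem_iUnion.1 hp
    by_cases hn : n < N
    · refine ⟨p, subset_union_right (mem_biUnion (Finset.mem_range.2 hn) hp), ?_⟩
      simpa using half_pos hδ
    obtain ⟨q, hq, hpq⟩ := exists_dist_lt_of_hausdorffDist_lt hp (hN n (not_lt.1 hn))
      (hausdorffEDist_ne_top_of_nonempty_of_bounded ⟨p, hp⟩ hL' (hK n).isBounded hL.isBounded)
    exact ⟨q, subset_union_left hq, hpq⟩
  have hF : IsCompact F := hL.union ((Finset.range N).isCompact_biUnion fun n _ => hK n)
  obtain ⟨c, hc, hcF⟩ := totallyBounded_iff.1 hF.totallyBounded (δ / 2) (half_pos hδ)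
  refine ⟨c, hc, fun p hp => ?_⟩
  obtain ⟨q, hq, hpq⟩ := hnear p hp
  obtain ⟨z, hz, hqz⟩ := mem_iUnion₂.1 (hcF hq)
  exact mem_iUnion₂.2 ⟨z, hz, mem_ball.2 (by linarith [dist_triangle p q z, mem_ball.1 hqz])⟩

end TimedGromov

end

open TimedGromov

/-- Timed Gromov Compactness: If `(X j, d j, τ j)` is a sequence of
compact timed metric spaces with `diam (X j) ≤ D`, uniformly totally bounded (for
every `R ∈ (0,D]` there is `N R` such that each `X j` is covered by `N R` balls of
radius `R`), and `τ j : X j → [0, τmax]` Lipschitz-1, then a subsequence converges in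
the intrinsic timed Hausdorff sense to a compact timed metric space
`(X∞, d∞, τ∞)`: there exist distance and time preserving timed-Fréchet maps
`φ k : X (g k) → [0,τmax] × Z ⊂ ℓ^∞` (coordinate `0` equal to the time, later
coordinates the distances to a countable dense set) with `Z ⊂ ℓ^∞` compact containing
all images, such that `d_H(φ k (X (g k)), φ∞ (X∞)) → 0`. -/
theorem timed_gromov_compactness
    (X : ℕ → Type) [∀ j, MetricSpace (X j)] [∀ j, CompactSpace (X j)]
    [∀ j, Nonempty (X j)]
    (D : ℝ) (hD : ∀ j, Metric.diam (Set.univ : Set (X j)) ≤ D)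
    (τmax : ℝ) (τ : ∀ j, X j → ℝ)
    (hτrange : ∀ j x, τ j x ∈ Set.Icc (0 : ℝ) τmax)
    (hτlip : ∀ j (x y : X j), |τ j x - τ j y| ≤ dist x y)
    (N : ℝ → ℕ)
    (hN : ∀ R ∈ Set.Ioc (0 : ℝ) D, ∀ j, ∃ c : Fin (N R) → X j,
      ∀ x : X j, ∃ m, dist x (c m) < R) :
    ∃ g : ℕ → ℕ, StrictMono g ∧
    ∃ (Xinf : Type) (mXinf : MetricSpace Xinf),
      CompactSpace Xinf ∧ Nonempty Xinf ∧
      ∃ τinf : Xinf → ℝ,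
        (∀ x, τinf x ∈ Set.Icc (0 : ℝ) τmax) ∧
        (∀ x y : Xinf, |τinf x - τinf y| ≤ dist x y) ∧
        ∃ Z : Set (lp (fun _ : ℕ => ℝ) ⊤), IsCompact Z ∧
        ∃ (φ : ∀ k : ℕ, X (g k) → lp (fun _ : ℕ => ℝ) ⊤)
          (φinf : Xinf → lp (fun _ : ℕ => ℝ) ⊤),
          (∀ k, ∃ s : ℕ → X (g k), DenseRange s ∧ ∀ x : X (g k),
            ((φ k x : ∀ _ : ℕ, ℝ) 0 = τ (g k) x ∧
              ∀ n : ℕ, (φ k x : ∀ _ : ℕ, ℝ) (n + 1) = dist (s n) x)) ∧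
          (∃ s : ℕ → Xinf, DenseRange s ∧ ∀ x : Xinf,
            ((φinf x : ∀ _ : ℕ, ℝ) 0 = τinf x ∧
              ∀ n : ℕ, (φinf x : ∀ _ : ℕ, ℝ) (n + 1) = dist (s n) x)) ∧
          (∀ k, Isometry (φ k)) ∧ Isometry φinf ∧
          (∀ k, Set.range (φ k) ⊆ Z) ∧ Set.range φinf ⊆ Z ∧
          Tendsto (fun k => Metric.hausdorffDist (Set.range (φ k)) (Set.range φinf))
            atTop (nhds 0) := by
  have hD' : ∀ j (x y : X j), dist x y ≤ D := fun j x y =>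
    (Metric.dist_le_diam_of_mem isCompact_univ.isBounded trivial trivial).trans (hD j)
  have hτ : ∀ j, LipschitzWith 1 (τ j) := fun j => lipschitzWith_one_iff_abs_sub_le.2 (hτlip j)
  have hε : ∀ n : ℕ, 0 < 1 / ((n : ℝ) + 1) := fun n => Nat.one_div_pos_of_nat
  obtain ⟨t, J, hJ⟩ := exists_seq_uniform_nets (exists_uniform_net_of_dist_le hD' hN) hε
  obtain ⟨g, hg, Y, _, σ, i, hY, hi, hσ, hσT, hmatch⟩ :=
    exists_subseq_matchedNets hτ hτrange hD' hε tendsto_one_div_add_atTop_nhds_zero_nat hJ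
  have : Nonempty Y := ⟨i 0⟩
  choose s hs hH using fun n =>
    (hmatch n).exists_denseRange_hausdorffDist_le (hτ (g n)) hσ (by positivity)
  set φ := fun n => timedFrechetMap (hτ (g n)).continuous (s n)
  set φinf := timedFrechetMap hσ.continuous fun p => i p.unpair.1
  have hφ (n : ℕ) : Isometry (φ n) := isometry_timedFrechetMap (hτ (g n)) (hs n)
  have hi' : DenseRange fun p : ℕ => i p.unpair.1 :=
    hi.comp (Prod.fst_surjective.comp Nat.surjective_unpair).denseRange
      continuous_of_discreteTopology
  have hφinf : Isometry φinf := isometry_timedFrechetMap hσ hi'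
  have hlim : Tendsto (fun n => hausdorffDist (range (φ n)) (range φinf)) atTop (𝓝 0) :=
    squeeze_zero (fun _ => hausdorffDist_nonneg) hH <| by
      simpa using ((tendsto_one_div_add_atTop_nhds_zero_nat (𝕜 := ℝ)).const_mul 2).const_mul 5
  obtain ⟨Z, hZ, hφZ, hφinfZ⟩ := exists_isCompact_superset_of_tendsto_hausdorffDist
    (fun n => isCompact_range (hφ n).continuous) (isCompact_range hφinf.continuous)
    (range_nonempty _) hlim
  exact ⟨g, hg, Y, _, hY, ‹_›, σ, hσT, lipschitzWith_one_iff_abs_sub_le.1 hσ, Z, hZ, φ, φinf,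
    fun n => ⟨s n, hs n, fun x => ⟨rfl, fun m => rfl⟩⟩, ⟨_, hi', fun y => ⟨rfl, fun m => rfl⟩⟩,
    hφ, hφinf, hφZ, hφinfZ, hlim⟩
end

section
/- (Gromov Compactness via Fréchet maps) If (X_j, d_j) is a sequence of compact metric spaces with diam(X_j) ≤ D and uniformly totally bounded (for each R > 0 there exists N(R) such that each X_j is covered by N(R) balls of radius R), then a subsequence converges in the Gromov–Hausdorff sense: there exist a compact metric space X_∞, a compact set Z ⊂ ℓ^∞, and isometric (distance preserving) Fréchet embeddings κ_j : X_j → Z and κ_∞ : X_∞ → Z such that d_H^Z(κ_j(X_j), κ_∞(X_∞)) → 0. -/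
open Filter Metric Set GromovHausdorff TopologicalSpace

noncomputable section FrechetAux

variable {A : Type} [MetricSpace A] [CompactSpace A] [Nonempty A]

private lemma frechet_mem (s : ℕ → A) (x : A) : Memℓp (fun n => dist (s n) x) ⊤ := by
  apply memℓp_infty
  refine ⟨Metric.diam (Set.univ : Set A), ?_⟩
  rintro r ⟨n, rfl⟩
  simp only [Real.norm_eq_abs, abs_of_nonneg dist_nonneg]
  exact Metric.dist_le_diam_of_mem isCompact_univ.isBounded (Set.mem_univ _) (Set.mem_univ _)

/-- The Fréchet map associated to a sequence `s`. -/
def frechet (s : ℕ → A) (x : A) : lp (fun _ : ℕ => ℝ) ⊤ :=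
  ⟨fun n => dist (s n) x, frechet_mem s x⟩

lemma frechet_apply (s : ℕ → A) (x : A) (n : ℕ) :
    (frechet s x : ∀ _ : ℕ, ℝ) n = dist (s n) x := rfl

lemma frechet_dist_le {B : Type} [MetricSpace B] [CompactSpace B] [Nonempty B]
    {s : ℕ → A} {u : ℕ → B} {x : A} {y : B} {C : ℝ} (hC : 0 ≤ C)
    (h : ∀ n, |dist (s n) x - dist (u n) y| ≤ C) :
    dist (frechet s x) (frechet u y) ≤ C := by
  rw [dist_eq_norm]
  refine lp.norm_le_of_forall_le hC fun n => ?_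
  have : (↑(frechet s x - frechet u y) : ∀ _ : ℕ, ℝ) n
      = dist (s n) x - dist (u n) y := by
    rw [lp.coeFn_sub]; rfl
  rw [this, Real.norm_eq_abs]
  exact h n

lemma frechet_isometry {s : ℕ → A} (hs : DenseRange s) : Isometry (frechet s) := by
  refine Isometry.of_dist_eq fun x y => ?_
  refine le_antisymm ?_ ?_
  · refine frechet_dist_le (dist_nonneg : (0:ℝ) ≤ dist x y) fun n => ?_
    rw [dist_comm (s n) x, dist_comm (s n) y]
    exact abs_dist_sub_le x y (s n)
  · refine le_of_forall_sub_le fun ε hε => ?_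
    obtain ⟨n, hn⟩ := Metric.denseRange_iff.1 hs x (ε / 2) (by positivity)
    have h1 : |dist (s n) x - dist (s n) y| ≤ dist (frechet s x) (frechet s y) := by
      rw [dist_eq_norm]
      have h2 := lp.norm_apply_le_norm (by norm_num) (frechet s x - frechet s y) n
      have h3 : (↑(frechet s x - frechet s y) : ∀ _ : ℕ, ℝ) n
          = dist (s n) x - dist (s n) y := by
        rw [lp.coeFn_sub]; rfl
      rwa [h3, Real.norm_eq_abs] at h2
    have h4 : dist (s n) y - dist (s n) x ≤ |dist (s n) x - dist (s n) y| := by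
      rw [abs_sub_comm]; exact le_abs_self _
    have h5 : dist x y ≤ dist x (s n) + dist (s n) y := dist_triangle _ _ _
    have h6 : dist x (s n) = dist (s n) x := dist_comm _ _
    linarith

/-- Key approximation lemma: if `A` and `B` admit isometric embeddings into a common
space `C` with Hausdorff distance `< η` between the images, then, given a dense
sequence `t` in `A`, there is a dense sequence `u` in `B` such that the Fréchet images
of `B` (w.r.t. `u`) and of `A` (w.r.t. the sequence `n ↦ t (unpair n).1`) are at
Hausdorff distance at most `3η`. -/
lemma frechet_key {B : Type} [MetricSpace B] [CompactSpace B] [Nonempty B]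
    {C : Type} [MetricSpace C]
    {ι : A → C} {ρ : B → C} (hι : Isometry ι) (hρ : Isometry ρ)
    {η : ℝ}
    (hH : Metric.hausdorffDist (Set.range ι) (Set.range ρ) < η)
    (t : ℕ → A) (ht : DenseRange t) :
    ∃ u : ℕ → B, DenseRange u ∧
      Metric.hausdorffDist (Set.range (frechet u))
        (Set.range (frechet (fun n => t (Nat.unpair n).1))) ≤ 3 * η := by
  classical
  set s' : ℕ → A := fun n => t (Nat.unpair n).1 with hs'def
  have hη : 0 < η := lt_of_le_of_lt Metric.hausdorffDist_nonneg hH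
  have hfin : EMetric.hausdorffEdist (Set.range ι) (Set.range ρ) ≠ ⊤ :=
    Metric.hausdorffEdist_ne_top_of_nonempty_of_bounded (Set.range_nonempty _)
      (Set.range_nonempty _) (isCompact_range hι.continuous).isBounded
      (isCompact_range hρ.continuous).isBounded
  obtain ⟨w, hw⟩ := TopologicalSpace.exists_dense_seq B
  have hx : ∀ i : ℕ, ∃ z : A, dist (ι z) (ρ (w i)) < η := by
    intro i
    obtain ⟨z, ⟨a, rfl⟩, hz⟩ :=
      Metric.exists_dist_lt_of_hausdorffDist_lt' (Set.mem_range_self (w i)) hH hfin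
    exact ⟨a, hz⟩
  choose x hxd using hx
  have ha : ∀ i : ℕ, ∃ m : ℕ, dist (x i) (t m) < η := fun i =>
    Metric.denseRange_iff.1 ht (x i) η hη
  choose a had using ha
  have hv : ∀ n : ℕ, ∃ y : B, dist (ι (s' n)) (ρ y) < η := by
    intro n
    obtain ⟨z, ⟨b, rfl⟩, hz⟩ :=
      Metric.exists_dist_lt_of_hausdorffDist_lt (Set.mem_range_self (s' n)) hH hfin
    exact ⟨b, hz⟩
  choose v hvd using hv
  set u : ℕ → B := fun n =>
    if h : ∃ i, n = Nat.pair (a i) (i + 1) then w h.choose else v n with hudef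
  have hu_at : ∀ i, u (Nat.pair (a i) (i + 1)) = w i := by
    intro i
    have h : ∃ i', Nat.pair (a i) (i + 1) = Nat.pair (a i') (i' + 1) := ⟨i, rfl⟩
    have hch : h.choose = i := by
      have h1 := h.choose_spec
      have h2 := (Nat.pair_eq_pair.1 h1.symm).2
      omega
    simp only [hudef, dif_pos h, hch]
  have huD : DenseRange u := by
    rw [Metric.denseRange_iff]
    intro y r hr
    obtain ⟨i, hi⟩ := Metric.denseRange_iff.1 hw y r hr
    exact ⟨Nat.pair (a i) (i + 1), by rwa [hu_at]⟩
  have hcouple : ∀ n, dist (ι (s' n)) (ρ (u n)) ≤ 2 * η := by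
    intro n
    by_cases h : ∃ i, n = Nat.pair (a i) (i + 1)
    · obtain ⟨i, rfl⟩ := h
      rw [hu_at]
      have h1 : s' (Nat.pair (a i) (i + 1)) = t (a i) := by
        simp only [hs'def, Nat.unpair_pair]
      rw [h1]
      calc dist (ι (t (a i))) (ρ (w i))
          ≤ dist (ι (t (a i))) (ι (x i)) + dist (ι (x i)) (ρ (w i)) := dist_triangle _ _ _
        _ ≤ η + η := add_le_add (by rw [hι.dist_eq, dist_comm]; exact (had i).le) (hxd i).le
        _ = 2 * η := by ring
    · simp only [hudef, dif_neg h]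
      exact (hvd n).le.trans (by linarith)
  have hbound : ∀ (xA : A) (y : B), dist (ι xA) (ρ y) < η →
      ∀ n, |dist (u n) y - dist (s' n) xA| ≤ 3 * η := by
    intro xA y hz n
    have e1 : dist (ρ (u n)) (ρ y) = dist (u n) y := hρ.dist_eq _ _
    have e2 : dist (ι (s' n)) (ι xA) = dist (s' n) xA := hι.dist_eq _ _
    have c1 : dist (ρ (u n)) (ι (s' n)) = dist (ι (s' n)) (ρ (u n)) := dist_comm _ _
    have c2 : dist (ρ y) (ι xA) = dist (ι xA) (ρ y) := dist_comm _ _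
    have t1 := dist_triangle4 (ρ (u n)) (ι (s' n)) (ι xA) (ρ y)
    have t2 := dist_triangle4 (ι (s' n)) (ρ (u n)) (ρ y) (ι xA)
    have hc := hcouple n
    rw [abs_sub_le_iff]
    constructor <;> linarith
  refine ⟨u, huD, ?_⟩
  refine Metric.hausdorffDist_le_of_mem_dist (by positivity) ?_ ?_
  · rintro _ ⟨y, rfl⟩
    obtain ⟨z, ⟨xA, rfl⟩, hz⟩ :=
      Metric.exists_dist_lt_of_hausdorffDist_lt' (Set.mem_range_self y) hH hfin
    refine ⟨frechet s' xA, Set.mem_range_self _, ?_⟩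
    exact frechet_dist_le (by positivity) (hbound xA y hz)
  · rintro _ ⟨xA, rfl⟩
    obtain ⟨z, ⟨y, rfl⟩, hz⟩ :=
      Metric.exists_dist_lt_of_hausdorffDist_lt (Set.mem_range_self xA) hH hfin
    refine ⟨frechet u y, Set.mem_range_self _, ?_⟩
    refine frechet_dist_le (by positivity) fun n => ?_
    rw [abs_sub_comm]
    exact hbound xA y hz n

end FrechetAux

/-- Gromov Compactness via Fréchet maps: If `(X j, d j)` is a sequence
of compact metric spaces with `diam (X j) ≤ D`, uniformly totally bounded, then a
subsequence converges in the Gromov–Hausdorff sense: there exist a compact metric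
space `X∞`, a compact set `Z ⊂ ℓ^∞`, and distance preserving Fréchet embeddings
`κ k : X (g k) → Z` and `κ∞ : X∞ → Z` (coordinates given by the distances to a
countable dense sequence) with `d_H(κ k (X (g k)), κ∞ (X∞)) → 0`. -/
theorem gromov_compactness_via_frechet
    (X : ℕ → Type) [∀ j, MetricSpace (X j)] [∀ j, CompactSpace (X j)]
    [∀ j, Nonempty (X j)]
    (D : ℝ) (hD : ∀ j, Metric.diam (Set.univ : Set (X j)) ≤ D)
    (N : ℝ → ℕ)
    (hN : ∀ R > (0 : ℝ), ∀ j, ∃ c : Fin (N R) → X j,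
      ∀ x : X j, ∃ m, dist x (c m) < R) :
    ∃ g : ℕ → ℕ, StrictMono g ∧
    ∃ (Xinf : Type) (mXinf : MetricSpace Xinf),
      CompactSpace Xinf ∧ Nonempty Xinf ∧
      ∃ Z : Set (lp (fun _ : ℕ => ℝ) ⊤), IsCompact Z ∧
      ∃ (κ : ∀ k : ℕ, X (g k) → lp (fun _ : ℕ => ℝ) ⊤)
        (κinf : Xinf → lp (fun _ : ℕ => ℝ) ⊤),
        (∀ k, ∃ s : ℕ → X (g k), DenseRange s ∧
          ∀ (x : X (g k)) (n : ℕ), (κ k x : ∀ _ : ℕ, ℝ) n = dist (s n) x) ∧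
        (∃ s : ℕ → Xinf, DenseRange s ∧
          ∀ (x : Xinf) (n : ℕ), (κinf x : ∀ _ : ℕ, ℝ) n = dist (s n) x) ∧
        (∀ k, Isometry (κ k)) ∧ Isometry κinf ∧
        (∀ k, Set.range (κ k) ⊆ Z) ∧ Set.range κinf ⊆ Z ∧
        Tendsto (fun k => Metric.hausdorffDist (Set.range (κ k)) (Set.range κinf))
          atTop (nhds 0) := by
  classical
  set q : ℕ → GHSpace := fun j => toGHSpace (X j) with hq
  -- total boundedness of the family in GH space
  have htb : TotallyBounded (Set.range q) := by
    refine GromovHausdorff.totallyBounded (C := D) (u := fun n : ℕ => 1 / ((n : ℝ) + 1))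
      (K := fun n => N (1 / ((n : ℝ) + 1))) tendsto_one_div_add_atTop_nhds_zero_nat ?_ ?_
    · rintro p ⟨j, rfl⟩
      obtain ⟨e⟩ : Nonempty (X j ≃ᵢ (toGHSpace (X j)).Rep) :=
        toGHSpace_eq_toGHSpace_iff_isometryEquiv.1 (GHSpace.toGHSpace_rep _).symm
      have h1 : (Set.univ : Set (toGHSpace (X j)).Rep) = Set.range e :=
        e.surjective.range_eq.symm
      rw [hq, h1, e.isometry.diam_range]
      exact hD j
    · rintro p ⟨j, rfl⟩ n
      obtain ⟨e⟩ : Nonempty (X j ≃ᵢ (toGHSpace (X j)).Rep) :=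
        toGHSpace_eq_toGHSpace_iff_isometryEquiv.1 (GHSpace.toGHSpace_rep _).symm
      have hR : (0 : ℝ) < 1 / ((n : ℝ) + 1) := by positivity
      obtain ⟨c, hc⟩ := hN _ hR j
      refine ⟨Set.range (fun m => e (c m)), ?_, ?_⟩
      · exact le_trans Cardinal.mk_range_le (by simp)
      · intro y _
        obtain ⟨m, hm⟩ := hc (e.symm y)
        have : dist y (e (c m)) < 1 / ((n : ℝ) + 1) := by
          have h2 : dist (e (e.symm y)) (e (c m)) = dist (e.symm y) (c m) :=
            e.isometry.dist_eq _ _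
          rw [e.apply_symm_apply] at h2
          rw [h2]; exact hm
        exact Set.mem_biUnion (Set.mem_range_self m) (Metric.mem_ball.2 this)
  have hcomp : IsCompact (closure (Set.range q)) :=
    TotallyBounded.isCompact_of_isClosed htb.closure isClosed_closure
  obtain ⟨plim, -, g, hg, hlim⟩ :=
    hcomp.tendsto_subseq (fun n => subset_closure (Set.mem_range_self (f := q) n))
  refine ⟨g, hg, plim.Rep, inferInstance, inferInstance, inferInstance, ?_⟩
  -- distances to the limit
  have hd : Tendsto (fun k => dist (q (g k)) plim) atTop (nhds 0) :=
    tendsto_iff_dist_tendsto_zero.1 hlim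
  set η : ℕ → ℝ := fun k => dist (q (g k)) plim + 1 / ((k : ℝ) + 1) with hηdef
  have hηlim : Tendsto η atTop (nhds 0) := by
    have h := hd.add tendsto_one_div_add_atTop_nhds_zero_nat
    rw [add_zero] at h
    exact h
  have hηpos : ∀ k, 0 < η k := fun k => by
    have : (0 : ℝ) < 1 / ((k : ℝ) + 1) := by positivity
    have h0 := dist_nonneg (x := q (g k)) (y := plim)
    simp only [hηdef]; linarith
  -- dense sequence in the limit space
  obtain ⟨t, ht⟩ := TopologicalSpace.exists_dense_seq plim.Rep
  set s' : ℕ → plim.Rep := fun n => t (Nat.unpair n).1 with hs'def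
  have hs' : DenseRange s' := by
    have hr : Set.range s' = Set.range t := by
      apply Set.Subset.antisymm
      · rintro _ ⟨n, rfl⟩; exact Set.mem_range_self _
      · rintro _ ⟨m, rfl⟩
        exact ⟨Nat.pair m 0, by simp [hs'def, Nat.unpair_pair]⟩
    show Dense (Set.range s')
    rw [hr]; exact ht
  -- Hausdorff distance in the optimal coupling
  have hHk : ∀ k, Metric.hausdorffDist
      (Set.range (optimalGHInjl plim.Rep (X (g k))))
      (Set.range (optimalGHInjr plim.Rep (X (g k)))) < η k := by
    intro k
    rw [hausdorffDist_optimal]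
    have h1 : ghDist plim.Rep (X (g k)) = dist (q (g k)) plim := by
      simp only [ghDist, GHSpace.toGHSpace_rep, hq]
      exact dist_comm _ _
    rw [h1]
    have : (0 : ℝ) < 1 / ((k : ℝ) + 1) := by positivity
    simp only [hηdef]; linarith
  -- construct the approximating dense sequences
  have H : ∀ k, ∃ u : ℕ → X (g k), DenseRange u ∧
      Metric.hausdorffDist (Set.range (frechet u)) (Set.range (frechet s')) ≤ 3 * η k :=
    fun k => frechet_key (isometry_optimalGHInjl plim.Rep (X (g k)))
      (isometry_optimalGHInjr plim.Rep (X (g k))) (hHk k) t ht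
  choose u huD huH using H
  set κ : ∀ k : ℕ, X (g k) → lp (fun _ : ℕ => ℝ) ⊤ := fun k => frechet (u k) with hκdef
  set κinf : plim.Rep → lp (fun _ : ℕ => ℝ) ⊤ := frechet s' with hκinfdef
  have h3η : Tendsto (fun k => 3 * η k) atTop (nhds 0) := by
    have h := hηlim.const_mul (3 : ℝ)
    rw [mul_zero] at h
    exact h
  have hHtend : Tendsto (fun k => Metric.hausdorffDist (Set.range (κ k)) (Set.range κinf))
      atTop (nhds 0) :=
    squeeze_zero (fun k => Metric.hausdorffDist_nonneg) (fun k => huH k) h3η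
  -- the common compact set Z
  set U : Set (lp (fun _ : ℕ => ℝ) ⊤) := Set.range κinf ∪ ⋃ k, Set.range (κ k) with hUdef
  have hcptinf : IsCompact (Set.range κinf) :=
    isCompact_range (frechet_isometry hs').continuous
  have hcptk : ∀ k, IsCompact (Set.range (κ k)) := fun k =>
    isCompact_range (frechet_isometry (huD k)).continuous
  have hUtb : TotallyBounded U := by
    rw [Metric.totallyBounded_iff]
    intro ε hε
    obtain ⟨K, hK⟩ := Metric.tendsto_atTop.1 hHtend (ε / 3) (by positivity)
    obtain ⟨Tinf, hTinffin, hTinf⟩ := Metric.totallyBounded_iff.1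
      hcptinf.totallyBounded (ε / 3) (by positivity)
    have hTk : ∀ k, ∃ T : Set (lp (fun _ : ℕ => ℝ) ⊤), T.Finite ∧
        Set.range (κ k) ⊆ ⋃ y ∈ T, Metric.ball y ε := fun k =>
      Metric.totallyBounded_iff.1 (hcptk k).totallyBounded ε hε
    choose T hTfin hT using hTk
    refine ⟨Tinf ∪ ⋃ k ∈ Finset.range K, T k, ?_, ?_⟩
    · exact hTinffin.union ((Finset.range K).finite_toSet.biUnion fun k _ => hTfin k)
    · rintro z (hz | hz)
      · obtain ⟨y, hy, hzy⟩ := Set.mem_iUnion₂.1 (hTinf hz)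
        refine Set.mem_biUnion (Set.mem_union_left _ hy) ?_
        exact Metric.mem_ball.2 (lt_of_lt_of_le (Metric.mem_ball.1 hzy) (by linarith))
      · obtain ⟨k, hzs⟩ := Set.mem_iUnion.1 hz
        rcases lt_or_ge k K with hk | hk
        · obtain ⟨y, hy, hzy⟩ := Set.mem_iUnion₂.1 (hT k hzs)
          refine Set.mem_biUnion (Set.mem_union_right _ ?_) hzy
          exact Set.mem_biUnion (Finset.mem_coe.2 (Finset.mem_range.2 hk)) hy
        · have hfin : EMetric.hausdorffEdist (Set.range (κ k)) (Set.range κinf) ≠ ⊤ :=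
            Metric.hausdorffEdist_ne_top_of_nonempty_of_bounded (Set.range_nonempty _)
              (Set.range_nonempty _) (hcptk k).isBounded hcptinf.isBounded
          have hlt : Metric.hausdorffDist (Set.range (κ k)) (Set.range κinf) < ε / 3 := by
            have := hK k hk
            rw [Real.dist_eq, sub_zero,
              abs_of_nonneg Metric.hausdorffDist_nonneg] at this
            exact this
          obtain ⟨w, hw, hzw⟩ := Metric.exists_dist_lt_of_hausdorffDist_lt hzs hlt hfin
          obtain ⟨y, hy, hwy⟩ := Set.mem_iUnion₂.1 (hTinf hw)
          refine Set.mem_biUnion (Set.mem_union_left _ hy) (Metric.mem_ball.2 ?_)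
          have h1 : dist z y ≤ dist z w + dist w y := dist_triangle _ _ _
          have h2 := Metric.mem_ball.1 hwy
          linarith
  refine ⟨closure U, TotallyBounded.isCompact_of_isClosed hUtb.closure isClosed_closure,
    κ, κinf, ?_, ?_, ?_, ?_, ?_, ?_, hHtend⟩
  · exact fun k => ⟨u k, huD k, fun x n => rfl⟩
  · exact ⟨s', hs', fun x n => rfl⟩
  · exact fun k => frechet_isometry (huD k)
  · exact frechet_isometry hs'
  · intro k
    exact (Set.subset_iUnion (fun k => Set.range (κ k)) k).trans
      (Set.subset_union_right.trans subset_closure)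
  · exact Set.subset_union_left.trans subset_closure
end

section
/- (Arzelà–Ascoli with GH-converging domains) Let (X_j,d_j) be compact metric spaces converging in the Gromov–Hausdorff sense to a compact metric space (X_∞, d_∞), and let F_j : X_j → [0, F_max] be K-Lipschitz functions for a uniform K > 0. Then a subsequence of the F_j converges to a K-Lipschitz function F_∞ : X_∞ → [0, F_max] in the following sense: there exist a common index set 𝒜 with surjections 𝓘^j : 𝒜 → X_j and 𝓘^∞ : 𝒜 → X_∞ such that sup_{α ∈ 𝒜} |F_j(𝓘^j(α)) − F_∞(𝓘^∞(α))| → 0 and sup_{α,α' ∈ 𝒜} |d_j(𝓘^j(α), 𝓘^j(α')) − d_∞(𝓘^∞(α), 𝓘^∞(α'))| → 0. -/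
open Filter Function Set BoundedContinuousFunction
open scoped NNReal ENNReal Topology

/-!
Couple each `X j` with the limit isometrically inside `ℓ^∞` so that the two images are at
Hausdorff distance `δ j → 0`. Extending `F j` from the image of `X j` to all of `ℓ^∞` (McShane,
then clamped to `[0, Fmax]`) and restricting to the image of the limit transports `F j` to a
`K`-Lipschitz function on `X∞`; Arzelà–Ascoli on the compact space `X∞` makes a subsequence of
these converge uniformly. An address is a point of `X∞` with a `δ j`-close partner in every
`X j`: along it both the distortion of distances and the error `|F j - F∞|` are `O(δ j)`
plus the uniform error on `X∞`.
-/

structure Address {ι Y : Type*} {X : ι → Type*} (R : ∀ i, X i → Y → Prop) where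
  limit : Y
  point : ∀ i, X i
  rel : ∀ i, R i (point i) limit

namespace Address

variable {ι Y : Type*} {X : ι → Type*} {R : ∀ i, X i → Y → Prop}

theorem limit_surjective (hR : ∀ i y, ∃ x, R i x y) : Surjective (limit (R := R)) := by
  choose s hs using hR
  exact fun y => ⟨⟨y, fun i => s i y, fun i => hs i y⟩, rfl⟩

theorem point_surjective (hR : ∀ i y, ∃ x, R i x y) (hR' : ∀ i x, ∃ y, R i x y) (i : ι) :
    Surjective fun a : Address R => a.point i := by
  classical
  choose s hs using hR
  intro x
  obtain ⟨y, hxy⟩ := hR' i x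
  refine ⟨⟨y, update (fun j => s j y) i x, fun j => ?_⟩, by simp⟩
  rcases eq_or_ne j i with rfl | hji
  · simpa using hxy
  · simpa [hji] using hs j y

end Address

theorem GromovHausdorff.exists_isometry_forall_exists_dist_lt
    {X Y : Type*} [MetricSpace X] [CompactSpace X] [Nonempty X]
    [MetricSpace Y] [CompactSpace Y] [Nonempty Y] {δ : ℝ} (h : ghDist X Y < δ) :
    ∃ Φ : X → lp (fun _ : ℕ => ℝ) ∞, ∃ Ψ : Y → lp (fun _ : ℕ => ℝ) ∞,
      Isometry Φ ∧ Isometry Ψ ∧ (∀ x, ∃ y, dist (Φ x) (Ψ y) < δ) ∧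
        ∀ y, ∃ x, dist (Φ x) (Ψ y) < δ := by
  obtain ⟨Φ, Ψ, hΦ, hΨ, hXY⟩ := ghDist_eq_hausdorffDist X Y
  rw [hXY] at h
  have hfin : Metric.hausdorffEDist (range Φ) (range Ψ) ≠ ⊤ :=
    Metric.hausdorffEDist_ne_top_of_nonempty_of_bounded (range_nonempty _) (range_nonempty _)
      (isCompact_range hΦ.continuous).isBounded (isCompact_range hΨ.continuous).isBounded
  refine ⟨Φ, Ψ, hΦ, hΨ, fun x => ?_, fun y => ?_⟩
  · obtain ⟨_, ⟨y, rfl⟩, hxy⟩ := Metric.exists_dist_lt_of_hausdorffDist_lt (mem_range_self x) h hfin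
    exact ⟨y, hxy⟩
  · obtain ⟨_, ⟨x, rfl⟩, hxy⟩ :=
      Metric.exists_dist_lt_of_hausdorffDist_lt' (mem_range_self y) h hfin
    exact ⟨x, hxy⟩

theorem Isometry.abs_dist_sub_dist_le {X Y Z : Type*} [PseudoMetricSpace X]
    [PseudoMetricSpace Y] [PseudoMetricSpace Z] {Φ : X → Z} {Ψ : Y → Z}
    (hΦ : Isometry Φ) (hΨ : Isometry Ψ) (x x' : X) (y y' : Y) :
    |dist x x' - dist y y'| ≤ dist (Φ x) (Ψ y) + dist (Φ x') (Ψ y') := by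
  rw [← hΦ.dist_eq, ← hΨ.dist_eq, ← Real.dist_eq]
  exact dist_dist_dist_le _ _ _ _

theorem Isometry.exists_lipschitzWith_extension_mem_Icc {X Z : Type*} [MetricSpace X]
    [PseudoMetricSpace Z] {Φ : X → Z} (hΦ : Isometry Φ) {K : ℝ≥0} {F : X → ℝ}
    (hF : LipschitzWith K F) {a b : ℝ} (hab : a ≤ b) (hFab : ∀ x, F x ∈ Icc a b) :
    ∃ f : Z → ℝ, LipschitzWith K f ∧ (∀ z, f z ∈ Icc a b) ∧ ∀ x, f (Φ x) = F x := by
  have hext : LipschitzOnWith K (extend Φ F 0) (range Φ) := by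
    rintro _ ⟨x, rfl⟩ _ ⟨x', rfl⟩
    simpa only [hΦ.injective.extend_apply, hΦ.edist_eq] using hF x x'
  obtain ⟨f, hf, hfF⟩ := hext.extend_real
  refine ⟨fun z => max a (min b (f z)), (hf.const_min b).const_max a,
    fun z => ⟨le_max_left _ _, max_le hab (min_le_left _ _)⟩, fun x => ?_⟩
  show max a (min b (f (Φ x))) = F x
  rw [← hfF (mem_range_self x), hΦ.injective.extend_apply, min_eq_right (hFab x).2,
    max_eq_right (hFab x).1]

theorem exists_subseq_tendstoUniformly_of_lipschitzWith {α β : Type*} [PseudoMetricSpace α]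
    [CompactSpace α] [MetricSpace β] {s : Set β} (hs : IsCompact s) {K : ℝ≥0}
    {f : ℕ → α → β} (hf : ∀ n, LipschitzWith K (f n)) (hfs : ∀ n x, f n x ∈ s) :
    ∃ φ : ℕ → ℕ, StrictMono φ ∧ ∃ g : α → β, LipschitzWith K g ∧ (∀ x, g x ∈ s) ∧
      TendstoUniformly (fun n => f (φ n)) g atTop := by
  let A : Set (α →ᵇ β) := {u | LipschitzWith K u ∧ ∀ x, u x ∈ s}
  have hA : IsCompact A := by
    refine arzela_ascoli₂ s hs A ?_ (fun u x hu => hu.2 x) ?_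
    · have h1 : IsClosed {u : α →ᵇ β | LipschitzWith K u} :=
        (isClosed_setOfPred_lipschitzWith (α := α) (β := β) K).preimage continuous_coe
      have h2 : IsClosed {u : α →ᵇ β | ∀ x, u x ∈ s} := by
        rw [ofPred_forall]
        exact isClosed_iInter fun x => hs.isClosed.preimage (continuous_eval_const x)
      exact h1.inter h2
    · exact (LipschitzWith.uniformEquicontinuous _ K fun u : A => u.2.1).equicontinuous
  obtain ⟨g, ⟨hg, hgs⟩, φ, hφ, hlim⟩ :=
    hA.isSeqCompact fun n => (⟨hf n, hfs n⟩ : mkOfCompact ⟨f n, (hf n).continuous⟩ ∈ A)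
  exact ⟨φ, hφ, g, hg, hgs, tendsto_iff_tendstoUniformly.1 hlim⟩

theorem TendstoUniformly.forall_exists_forall_abs_sub_le {A : Type*} {u : ℕ → A → ℝ}
    {v : A → ℝ} (h : TendstoUniformly u v atTop) :
    ∀ ε > 0, ∃ N, ∀ k ≥ N, ∀ a, |u k a - v a| ≤ ε := fun ε hε =>
  eventually_atTop.1 <| (Metric.tendstoUniformly_iff.1 h ε hε).mono fun k hk a => by
    rw [abs_sub_comm, ← Real.dist_eq]
    exact (hk a).le

section Coupling

variable {ι Y : Type*} {X Z : ι → Type*} [∀ i, PseudoMetricSpace (Z i)]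
  {Φ : ∀ i, X i → Z i} {Ψ : ∀ i, Y → Z i} {δ : ι → ℝ} {l : Filter ι}

/-- The address set `𝒜`: points of the limit `Y`, each with a `δ i`-close partner in every `X i`
for the couplings `Φ i`, `Ψ i`. -/
abbrev CouplingAddress (Φ : ∀ i, X i → Z i) (Ψ : ∀ i, Y → Z i) (δ : ι → ℝ) : Type _ :=
  Address fun i x y => dist (Φ i x) (Ψ i y) < δ i

theorem CouplingAddress.tendstoUniformly_dist_point [PseudoMetricSpace Y]
    [∀ i, PseudoMetricSpace (X i)] (hΦ : ∀ i, Isometry (Φ i))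
    (hΨ : ∀ i, Isometry (Ψ i)) (hδ : Tendsto δ l (𝓝 0)) :
    TendstoUniformly
      (fun i (p : CouplingAddress Φ Ψ δ × CouplingAddress Φ Ψ δ) =>
        dist (p.1.point i) (p.2.point i))
      (fun p => dist p.1.limit p.2.limit) l := by
  refine Metric.tendstoUniformly_iff.2 fun ε hε =>
    (hδ.eventually_lt_const (half_pos hε)).mono fun i hi ⟨a, a'⟩ => ?_
  rw [Real.dist_eq, abs_sub_comm]
  calc |dist (a.point i) (a'.point i) - dist a.limit a'.limit|
      ≤ dist (Φ i (a.point i)) (Ψ i a.limit) + dist (Φ i (a'.point i)) (Ψ i a'.limit) :=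
        (hΦ i).abs_dist_sub_dist_le (hΨ i) _ _ _ _
    _ < ε / 2 + ε / 2 := add_lt_add ((a.rel i).trans hi) ((a'.rel i).trans hi)
    _ = ε := add_halves ε

theorem CouplingAddress.tendstoUniformly_comp_point {β : Type*} [PseudoMetricSpace β]
    {K : ℝ≥0} {F : ∀ i, X i → β} {f : ∀ i, Z i → β}
    (hf : ∀ i, LipschitzWith K (f i)) (hfF : ∀ i x, f i (Φ i x) = F i x)
    (hδ : Tendsto δ l (𝓝 0)) {G : Y → β} (hG : TendstoUniformly (fun i y => f i (Ψ i y)) G l) :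
    TendstoUniformly
      (fun i (a : CouplingAddress Φ Ψ δ) => F i (a.point i))
      (fun a => G a.limit) l := by
  have hKδ : Tendsto (fun i => K * δ i) l (𝓝 0) := by simpa using hδ.const_mul (K : ℝ)
  refine Metric.tendstoUniformly_iff.2 fun ε hε => ?_
  filter_upwards [hKδ.eventually_lt_const (half_pos hε),
    Metric.tendstoUniformly_iff.1 hG _ (half_pos hε)] with i hKδi hGi a
  calc dist (G a.limit) (F i (a.point i))
      ≤ dist (G a.limit) (f i (Ψ i a.limit))
          + dist (f i (Ψ i a.limit)) (f i (Φ i (a.point i))) := by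
        rw [hfF]
        exact dist_triangle _ _ _
    _ < ε / 2 + ε / 2 := by
        refine add_lt_add (hGi _) (lt_of_le_of_lt ?_ hKδi)
        calc dist (f i (Ψ i a.limit)) (f i (Φ i (a.point i)))
            ≤ K * dist (Ψ i a.limit) (Φ i (a.point i)) := (hf i).dist_le_mul _ _
          _ ≤ K * δ i := by
              rw [dist_comm]
              exact mul_le_mul_of_nonneg_left (a.rel i).le K.coe_nonneg
    _ = ε := add_halves ε

end Coupling

/-- Arzelà–Ascoli with GH-converging domains: Let `(X j, d j)` be
compact metric spaces converging in the Gromov–Hausdorff sense to a compact metric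
space `(X∞, d∞)`, and `F j : X j → [0, Fmax]` be `K`-Lipschitz functions for a uniform
`K > 0`. Then a subsequence of the `F j` converges to a `K`-Lipschitz function
`F∞ : X∞ → [0, Fmax]`: there exist a common address set `𝒜` with surjections
`𝓘 k : 𝒜 → X (g k)` and `𝓘∞ : 𝒜 → X∞` such that
`sup_α |F (g k) (𝓘 k α) − F∞ (𝓘∞ α)| → 0` and
`sup_{α,α'} |d (𝓘 k α, 𝓘 k α') − d∞(𝓘∞ α, 𝓘∞ α')| → 0`. -/
theorem arzela_ascoli_with_addresses
    (X : ℕ → Type) [∀ j, MetricSpace (X j)] [∀ j, CompactSpace (X j)]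
    [∀ j, Nonempty (X j)]
    (Xinf : Type) [MetricSpace Xinf] [CompactSpace Xinf] [Nonempty Xinf]
    (hGH : Tendsto (fun j => GromovHausdorff.ghDist (X j) Xinf) atTop (nhds 0))
    (K Fmax : ℝ) (hK : 0 < K)
    (F : ∀ j, X j → ℝ)
    (hFrange : ∀ j x, F j x ∈ Set.Icc (0 : ℝ) Fmax)
    (hFlip : ∀ j (x y : X j), |F j x - F j y| ≤ K * dist x y) :
    ∃ g : ℕ → ℕ, StrictMono g ∧
    ∃ Finf : Xinf → ℝ,
      (∀ x, Finf x ∈ Set.Icc (0 : ℝ) Fmax) ∧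
      (∀ x y : Xinf, |Finf x - Finf y| ≤ K * dist x y) ∧
      ∃ (𝒜 : Type) (𝓘 : ∀ k : ℕ, 𝒜 → X (g k)) (𝓘inf : 𝒜 → Xinf),
        (∀ k, Function.Surjective (𝓘 k)) ∧ Function.Surjective 𝓘inf ∧
        (∀ ε > (0 : ℝ), ∃ N : ℕ, ∀ k ≥ N, ∀ α : 𝒜,
          |F (g k) (𝓘 k α) - Finf (𝓘inf α)| ≤ ε) ∧
        (∀ ε > (0 : ℝ), ∃ N : ℕ, ∀ k ≥ N, ∀ α α' : 𝒜,
          |dist (𝓘 k α) (𝓘 k α') - dist (𝓘inf α) (𝓘inf α')| ≤ ε) := by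
  have hFmax_nonneg : 0 ≤ Fmax := (hFrange 0 (Classical.arbitrary _)).1.trans (hFrange 0 _).2
  set δ : ℕ → ℝ := fun j => GromovHausdorff.ghDist (X j) Xinf + 1 / (j + 1)
  have hδ : Tendsto δ atTop (𝓝 0) := by
    simpa only [add_zero] using hGH.add tendsto_one_div_add_atTop_nhds_zero_nat
  choose Φ Ψ hΦ hΨ hXY hYX using fun j =>
    GromovHausdorff.exists_isometry_forall_exists_dist_lt
      (lt_add_of_pos_right _ Nat.one_div_pos_of_nat : _ < δ j)
  have hFK : ∀ j, LipschitzWith K.toNNReal (F j) := fun j =>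
    .of_dist_le_mul fun x y => by
      simpa only [Real.coe_toNNReal _ hK.le, Real.dist_eq] using hFlip j x y
  choose f hf hfmem hfΦ using fun j =>
    (hΦ j).exists_lipschitzWith_extension_mem_Icc (hFK j) hFmax_nonneg (hFrange j)
  obtain ⟨g, hg, Finf, hFinf, hFinfmem, hconv⟩ :=
    exists_subseq_tendstoUniformly_of_lipschitzWith (f := fun j => f j ∘ Ψ j) isCompact_Icc
      (fun j => by simpa only [mul_one] using (hf j).comp (hΨ j).lipschitz)
      fun j y => hfmem j (Ψ j y)
  have hδg := hδ.comp hg.tendsto_atTop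
  refine ⟨g, hg, Finf, hFinfmem, fun x y => ?_,
    CouplingAddress (fun k => Φ (g k)) (fun k => Ψ (g k)) (δ ∘ g), fun k a => a.point k,
    Address.limit, Address.point_surjective (fun k => hYX (g k)) (fun k => hXY (g k)),
    Address.limit_surjective fun k => hYX (g k),
    (CouplingAddress.tendstoUniformly_comp_point (fun k => hf (g k)) (fun k => hfΦ (g k)) hδg
      hconv).forall_exists_forall_abs_sub_le, fun ε hε => ?_⟩
  · simpa only [Real.coe_toNNReal _ hK.le, Real.dist_eq] using hFinf.dist_le_mul x y
  · obtain ⟨N, hN⟩ := (CouplingAddress.tendstoUniformly_dist_point (fun k => hΦ (g k))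
      (fun k => hΨ (g k)) hδg).forall_exists_forall_abs_sub_le ε hε
    exact ⟨N, fun k hk a a' => hN k hk (a, a')⟩
end
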